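/- Let n ≥ 2, let x_1 < ⋯ < x_n be real and m_1, …, m_n > 0, set l_k = x_{k+1} − x_k, and for 0 ≤ k ≤ n−1 let a^{(2k+1)}(z) = G_n(z) L_{n−1} G_{n−1}(z) ⋯ G_{n−k+1}(z) L_{n−k} G_{n−k}(z) with L_j = [[1, l_j, l_j²/2],[0,1,l_j],[0,0,1]] and G_j(z) = [[1,0,0],[0,1,0],[−2 m_j z,0,1]]. Denote by [·] the leading coefficient of a polynomial. Then m_{n−k} = −[a^{(2k+1)}_{31}] / (2 [a^{(2k+1)}_{33}]) for 0 ≤ k ≤ n−1, and l_{n−k} = 2 [a^{(2k+1)}_{33}] / [a^{(2k+1)}_{32}] for 1 ≤ k ≤ n−1. -/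
import Mathlib


open Polynomial Matrix

/-- The transfer matrix `L_k` of the discrete cubic string (with gap `l`). -/
noncomputable def Lmat (l : ℝ) : Matrix (Fin 3) (Fin 3) (Polynomial ℝ) :=
  !![1, Polynomial.C l, Polynomial.C (l ^ 2 / 2);
     0, 1, Polynomial.C l;
     0, 0, 1]

/-- The transfer matrix `G_k(z)` of the discrete cubic string (with mass `m`). -/
noncomputable def Gmat (m : ℝ) : Matrix (Fin 3) (Fin 3) (Polynomial ℝ) :=
  !![1, 0, 0;
     0, 1, 0;
     Polynomial.C (-2 * m) * Polynomial.X, 0, 1]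

/-- The transition matrix `S(z) = G_n(z) L_{n−1} G_{n−1}(z) ⋯ L_1 G_1(z)` of the
discrete cubic string with masses `m 1, …, m n` and gaps `l 1, …, l (n−1)`. -/
noncomputable def transMat (m l : ℕ → ℝ) : ℕ → Matrix (Fin 3) (Fin 3) (Polynomial ℝ)
  | 0 => 1
  | 1 => Gmat (m 1)
  | (k + 2) => Gmat (m (k + 2)) * Lmat (l (k + 1)) * transMat m l (k + 1)

/-- `aMat m l n k` is `a^{(2k+1)}(z) = G_n(z) L_{n−1} G_{n−1}(z) ⋯ L_{n−k} G_{n−k}(z)`,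
the product of the leftmost `2k+1` factors of the transition matrix. -/
noncomputable def aMat (m l : ℕ → ℝ) (n : ℕ) : ℕ → Matrix (Fin 3) (Fin 3) (Polynomial ℝ)
  | 0 => Gmat (m n)
  | (k + 1) => aMat m l n k * Lmat (l (n - (k + 1))) * Gmat (m (n - (k + 1)))

lemma row0 (A : Matrix (Fin 3) (Fin 3) (Polynomial ℝ)) (c d : ℝ) :
  (A * Lmat c * Gmat d) 2 0 = A 2 0 + (A 2 0 * C (c^2/2) + A 2 1 * C c + A 2 2) * (C (-2*d) * X) := by
  simp [Lmat, Gmat, Matrix.mul_apply, Fin.sum_univ_three]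

lemma row1 (A : Matrix (Fin 3) (Fin 3) (Polynomial ℝ)) (c d : ℝ) :
  (A * Lmat c * Gmat d) 2 1 = A 2 0 * C c + A 2 1 := by
  simp [Lmat, Gmat, Matrix.mul_apply, Fin.sum_univ_three]

lemma row2 (A : Matrix (Fin 3) (Fin 3) (Polynomial ℝ)) (c d : ℝ) :
  (A * Lmat c * Gmat d) 2 2 = A 2 0 * C (c^2/2) + A 2 1 * C c + A 2 2 := by
  simp [Lmat, Gmat, Matrix.mul_apply, Fin.sum_univ_three]

lemma inv_lemma (n : ℕ) (hn : 2 ≤ n) (x m : ℕ → ℝ)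
    (hx : ∀ i, 1 ≤ i → i < n → x i < x (i + 1))
    (hm : ∀ i, 1 ≤ i → i ≤ n → 0 < m i)
    (l : ℕ → ℝ) (hl : ∀ k, l k = x (k + 1) - x k) :
    ∀ k, k ≤ n - 1 →
      (aMat m l n k 2 1).natDegree ≤ k ∧
      (aMat m l n k 2 2).natDegree ≤ k ∧
      (aMat m l n k 2 0).natDegree ≤ k + 1 ∧
      (aMat m l n k 2 2).coeff k ≠ 0 ∧
      (aMat m l n k 2 0).coeff (k+1) = -2 * m (n-k) * (aMat m l n k 2 2).coeff k ∧
      (1 ≤ k → (aMat m l n k 2 1).coeff k = (aMat m l n k 2 2).coeff k * 2 / l (n-k)) := by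
  intro k
  induction k with
  | zero =>
    intro _
    have h0 : aMat m l n 0 2 0 = C (-2 * m n) * X := by simp [aMat, Gmat]
    have h1 : aMat m l n 0 2 1 = 0 := by simp [aMat, Gmat]
    have h2 : aMat m l n 0 2 2 = 1 := by simp [aMat, Gmat]
    rw [h0, h1, h2]
    refine ⟨by simp, by simp, ?_, by simp, by simp, by simp⟩
    calc (C (-2 * m n) * X).natDegree ≤ (C (-2 * m n)).natDegree + X.natDegree :=
          natDegree_mul_le
      _ ≤ 0 + 1 := add_le_add (le_of_eq (natDegree_C _)) natDegree_X_le
  | succ k ih =>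
    intro hk
    have hk' : k ≤ n - 1 := by omega
    obtain ⟨hq, hr, hp, hrc, hpc, _⟩ := ih hk'
    set p := aMat m l n k 2 0 with hpdef
    set q := aMat m l n k 2 1 with hqdef
    set r := aMat m l n k 2 2 with hrdef
    set c := l (n - (k+1)) with hcdef
    set d := m (n - (k+1)) with hddef
    -- positivity facts
    have hnk1 : 1 ≤ n - (k+1) := by omega
    have hnk2 : n - (k+1) + 1 = n - k := by omega
    have hcpos : 0 < c := by
      rw [hcdef, hl, hnk2]
      have := hx (n - (k+1)) hnk1 (by omega)
      rw [hnk2] at this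
      linarith
    have hdpos : 0 < d := hm _ hnk1 (by omega)
    have hmnk : 0 < m (n - k) := hm _ (by omega) (by omega)
    have hc0 : c ≠ 0 := ne_of_gt hcpos
    -- new entries
    have e0 : aMat m l n (k+1) 2 0 = p + (p * C (c^2/2) + q * C c + r) * (C (-2*d) * X) := by
      rw [show aMat m l n (k+1) = aMat m l n k * Lmat (l (n-(k+1))) * Gmat (m (n-(k+1))) from rfl]
      exact row0 _ _ _
    have e1 : aMat m l n (k+1) 2 1 = p * C c + q := by
      rw [show aMat m l n (k+1) = aMat m l n k * Lmat (l (n-(k+1))) * Gmat (m (n-(k+1))) from rfl]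
      exact row1 _ _ _
    have e2 : aMat m l n (k+1) 2 2 = p * C (c^2/2) + q * C c + r := by
      rw [show aMat m l n (k+1) = aMat m l n k * Lmat (l (n-(k+1))) * Gmat (m (n-(k+1))) from rfl]
      exact row2 _ _ _
    -- degree bounds
    have dpc : (p * C (c^2/2)).natDegree ≤ k + 1 := by
      refine natDegree_mul_le.trans ?_; simp [hp]
    have dqc : (q * C c).natDegree ≤ k + 1 := by
      refine natDegree_mul_le.trans ?_; simp; omega
    have dr' : (p * C (c^2/2) + q * C c + r).natDegree ≤ k + 1 := by
      refine (natDegree_add_le _ _).trans ?_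
      refine max_le ((natDegree_add_le _ _).trans (max_le dpc dqc)) (by omega)
    -- coeff of r' at k+1
    have cq : q.coeff (k+1) = 0 := coeff_eq_zero_of_natDegree_lt (by omega)
    have cr : r.coeff (k+1) = 0 := coeff_eq_zero_of_natDegree_lt (by omega)
    have cr' : (p * C (c^2/2) + q * C c + r).coeff (k+1) = p.coeff (k+1) * (c^2/2) := by
      simp [coeff_add, coeff_mul_C, cq, cr]
    have hpc1 : p.coeff (k+1) ≠ 0 := by
      rw [hpc]
      exact mul_ne_zero (by positivity) hrc
    have hr'ne : (p * C (c^2/2) + q * C c + r).coeff (k+1) ≠ 0 := by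
      rw [cr']; exact mul_ne_zero hpc1 (by positivity)
    refine ⟨?_, ?_, ?_, ?_, ?_, ?_⟩
    · rw [e1]
      refine (natDegree_add_le _ _).trans (max_le ?_ (by omega))
      refine natDegree_mul_le.trans ?_; simp [hp]
    · rw [e2]; exact dr'
    · rw [e0]
      refine (natDegree_add_le _ _).trans (max_le (by omega) ?_)
      have h1 : (C (-2*d) * X).natDegree ≤ 1 :=
        natDegree_mul_le.trans (by exact add_le_add (natDegree_C _).le natDegree_X_le)
      exact natDegree_mul_le.trans (by omega)
    · rw [e2]; exact hr'ne
    · rw [e0, e2]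
      have cpl : p.coeff (k+2) = 0 := coeff_eq_zero_of_natDegree_lt (by omega)
      rw [coeff_add, cpl, zero_add]
      have : ((p * C (c^2/2) + q * C c + r) * (C (-2*d) * X)).coeff (k+2)
          = -2*d * (p * C (c^2/2) + q * C c + r).coeff (k+1) := by
        rw [show (p * C (c^2/2) + q * C c + r) * (C (-2*d) * X)
            = C (-2*d) * (p * C (c^2/2) + q * C c + r) * X by ring]
        rw [coeff_mul_X, coeff_C_mul]
      rw [this]
    · intro _
      rw [e1, e2, coeff_add, coeff_mul_C, cq, add_zero, cr']
      field_simp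


/-- **Recovery of the masses and gaps from leading coefficients.**
With `[p]` denoting the leading coefficient of a polynomial `p`,
`m_{n−k} = −[a^{(2k+1)}_{31}]/(2[a^{(2k+1)}_{33}])` for `0 ≤ k ≤ n−1`, and
`l_{n−k} = 2[a^{(2k+1)}_{33}]/[a^{(2k+1)}_{32}]` for `1 ≤ k ≤ n−1`.
(Matrix indices are 0-based.) -/
theorem stmt11 (n : ℕ) (hn : 2 ≤ n) (x m : ℕ → ℝ)
    (hx : ∀ i, 1 ≤ i → i < n → x i < x (i + 1))
    (hm : ∀ i, 1 ≤ i → i ≤ n → 0 < m i)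
    (l : ℕ → ℝ) (hl : ∀ k, l k = x (k + 1) - x k) :
    (∀ k ≤ n - 1,
      m (n - k) = -(aMat m l n k 2 0).leadingCoeff
          / (2 * (aMat m l n k 2 2).leadingCoeff)) ∧
    (∀ k, 1 ≤ k → k ≤ n - 1 →
      l (n - k) = 2 * (aMat m l n k 2 2).leadingCoeff
          / (aMat m l n k 2 1).leadingCoeff) := by
  have key := inv_lemma n hn x m hx hm l hl
  constructor
  · intro k hk
    obtain ⟨hq, hr, hp, hrc, hpc, _⟩ := key k hk
    have hmnk : 0 < m (n - k) := hm _ (by omega) (by omega)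
    have hpne : (aMat m l n k 2 0).coeff (k+1) ≠ 0 := by
      rw [hpc]; exact mul_ne_zero (by positivity) hrc
    have hrdeg : (aMat m l n k 2 2).natDegree = k :=
      le_antisymm hr (le_natDegree_of_ne_zero hrc)
    have hpdeg : (aMat m l n k 2 0).natDegree = k + 1 :=
      le_antisymm hp (le_natDegree_of_ne_zero hpne)
    rw [Polynomial.leadingCoeff, Polynomial.leadingCoeff, hrdeg, hpdeg, hpc]
    field_simp
  · intro k hk1 hk
    obtain ⟨hq, hr, hp, hrc, hpc, hqc⟩ := key k hk
    have hqc := hqc hk1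
    have hlnk : 0 < l (n - k) := by
      rw [hl]
      have h1 : 1 ≤ n - k := by omega
      have := hx (n - k) h1 (by omega)
      linarith
    have hqne : (aMat m l n k 2 1).coeff k ≠ 0 := by
      rw [hqc]
      exact div_ne_zero (mul_ne_zero hrc two_ne_zero) (ne_of_gt hlnk)
    have hrdeg : (aMat m l n k 2 2).natDegree = k :=
      le_antisymm hr (le_natDegree_of_ne_zero hrc)
    have hqdeg : (aMat m l n k 2 1).natDegree = k :=
      le_antisymm hq (le_natDegree_of_ne_zero hqne)
    rw [Polynomial.leadingCoeff, Polynomial.leadingCoeff, hrdeg, hqdeg, hqc]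
    field_simp
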